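/- arXiv:2412.08967 — 8 statements merged into one kernel-verified Lean document; each statement's English description precedes it below -/
import Mathlib

section
/- Let (X,σ,τ) be a chronologically dense Lorentzian metric space with a compatible causal relation ≤, and let ς = {z_k} be a future causal chain with I⁻(z_k) ≠ ∅ for every k. Then there exists a future chronological chain {x_k} with x_k ≪ z_k for every k and I⁻({x_k}) = I⁻(ς). If moreover z_k ≪̸ z_{k'} for all k < k', then I⁻(ς) ≠ X. -/
open Topology Filter Set

noncomputable section

namespace BSC

variable {X : Type*}

/-! ## Basic chronology from a time separation -/

/-- The chronological relation induced by a time separation `τ`. -/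
def chron (τ : X → X → ENNReal) (x y : X) : Prop := 0 < τ x y

/-- The chronological past of a set. -/
def Iminus (τ : X → X → ENNReal) (S : Set X) : Set X := {y | ∃ x ∈ S, chron τ y x}

/-- The chronological future of a set. -/
def Iplus (τ : X → X → ENNReal) (S : Set X) : Set X := {y | ∃ x ∈ S, chron τ x y}

/-- A past set: `I⁻(S) = S`. -/
def IsPastSet (τ : X → X → ENNReal) (S : Set X) : Prop := Iminus τ S = S

/-- An indecomposable past set: a nonempty past set which is not the union of two past
sets properly contained in it. -/
def IsIP (τ : X → X → ENNReal) (S : Set X) : Prop :=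
  S.Nonempty ∧ IsPastSet τ S ∧
    ¬ ∃ A B : Set X, IsPastSet τ A ∧ IsPastSet τ B ∧ A ⊂ S ∧ B ⊂ S ∧ A ∪ B = S

/-- A terminal indecomposable past set: an IP which is not of the form `I⁻(x)`.
The future causal boundary is the set of TIPs. -/
def IsTIP (τ : X → X → ENNReal) (S : Set X) : Prop :=
  IsIP τ S ∧ ∀ x : X, S ≠ Iminus τ {x}

/-- A future chronological chain. -/
def FutureChain (τ : X → X → ENNReal) (c : ℕ → X) : Prop := ∀ n, chron τ (c n) (c (n + 1))

/-- A future causal chain with respect to a causal relation. -/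
def FutureCausalChain (le : X → X → Prop) (c : ℕ → X) : Prop := ∀ n, le (c n) (c (n + 1))

/-! ## Lorentzian metric spaces -/

/-- A Lorentzian metric space structure on a topological space `X`. -/
structure LorentzianMetric (X : Type*) [TopologicalSpace X] where
  tau : X → X → ENNReal
  lsc : LowerSemicontinuous fun p : X × X => tau p.1 p.2
  rev_tri : ∀ x y z, 0 < tau x y → 0 < tau y z → tau x y + tau y z ≤ tau x z

/-- A compatible causal relation on a Lorentzian metric space. -/
structure CompatibleCausal [TopologicalSpace X] (L : LorentzianMetric X) where
  rel : X → X → Prop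
  refl : ∀ x, rel x x
  trans : ∀ x y z, rel x y → rel y z → rel x z
  chron_sub : ∀ x y, 0 < L.tau x y → rel x y
  rev_tri : ∀ x y z, rel x y → rel y z → L.tau x y + L.tau y z ≤ L.tau x z

/-- Chronological density. -/
def ChronDense [TopologicalSpace X] (τ : X → X → ENNReal) : Prop :=
  (∀ x : X, (Iminus τ {x}).Nonempty →
    ∃ c : ℕ → X, FutureChain τ c ∧ (∀ n, chron τ (c n) x) ∧ Tendsto c atTop (𝓝 x)) ∧
  (∀ x : X, (Iplus τ {x}).Nonempty →
    ∃ c : ℕ → X, (∀ n, chron τ (c (n + 1)) (c n)) ∧ (∀ n, chron τ x (c n)) ∧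
      Tendsto c atTop (𝓝 x))

/-- Distinguishing. -/
def Distinguishing (τ : X → X → ENNReal) : Prop :=
  (∀ x y : X, Iminus τ {x} = Iminus τ {y} → x = y) ∧
  (∀ x y : X, Iplus τ {x} = Iplus τ {y} → x = y)

/-- The Alexandrov topology generated by the chronological diamonds. -/
def AlexandrovTopology (τ : X → X → ENNReal) : TopologicalSpace X :=
  TopologicalSpace.generateFrom {s | ∃ p q : X, s = Iplus τ {p} ∩ Iminus τ {q}}

/-- Strong causality: distinguishing plus the topology is the Alexandrov topology. -/
def StronglyCausal [t : TopologicalSpace X] (τ : X → X → ENNReal) : Prop :=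
  Distinguishing τ ∧ t = AlexandrovTopology τ

/-- Causal simplicity with respect to a causal relation `le`. -/
def CausallySimple [TopologicalSpace X] (τ : X → X → ENNReal) (le : X → X → Prop) : Prop :=
  StronglyCausal τ ∧ (∀ x : X, closure (Iplus τ {x}) = {y | le x y}) ∧
    (∀ x : X, closure (Iminus τ {x}) = {y | le y x})

/-! ## τ-length of curves -/

/-- The `τ`-length of the restriction of a curve `γ` to `[a,b]`: the infimum over all
partitions `a = t 0 ≤ t 1 ≤ ⋯ ≤ t n = b` of the sums of the time separations of
consecutive points. -/
def tauLength (τ : X → X → ENNReal) (γ : ℝ → X) (a b : ℝ) : ENNReal :=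
  ⨅ (n : ℕ) (t : ℕ → ℝ) (_ : t 0 = a) (_ : t n = b) (_ : ∀ i < n, t i ≤ t (i + 1)),
    ∑ i ∈ Finset.range n, τ (γ (t i)) (γ (t (i + 1)))

/-- The total `τ`-length of a curve defined on a set `I ⊆ ℝ`: the supremum of the
`τ`-lengths of its restrictions to compact subintervals. -/
def tauLengthOn (τ : X → X → ENNReal) (γ : ℝ → X) (I : Set ℝ) : ENNReal :=
  ⨆ (a : ℝ) (b : ℝ) (_ : a ∈ I) (_ : b ∈ I) (_ : a ≤ b), tauLength τ γ a b

/-! ## Lorentzian pre-length spaces -/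

/-- A Lorentzian pre-length space structure on a metric space `X`. -/
structure LorPreLength (X : Type*) [MetricSpace X] where
  tau : X → X → ENNReal
  chron : X → X → Prop
  causal : X → X → Prop
  causal_refl : ∀ x, causal x x
  causal_trans : ∀ x y z, causal x y → causal y z → causal x z
  chron_trans : ∀ x y z, chron x y → chron y z → chron x z
  chron_le_causal : ∀ x y, chron x y → causal x y
  lsc : LowerSemicontinuous fun p : X × X => tau p.1 p.2
  rev_tri : ∀ x y z, causal x y → causal y z → tau x y + tau y z ≤ tau x z
  pos_iff : ∀ x y, 0 < tau x y ↔ chron x y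

variable [MetricSpace X]

/-- Locally Lipschitz on a subset of `ℝ`. -/
def LocallyLipschitzOnSet (γ : ℝ → X) (I : Set ℝ) : Prop :=
  ∀ t ∈ I, ∃ K : NNReal, ∃ s ∈ 𝓝[I] t, LipschitzOnWith K γ s

/-- A future-directed causal curve on `I`. -/
def IsCausalCurveOn (L : LorPreLength X) (γ : ℝ → X) (I : Set ℝ) : Prop :=
  (∃ s ∈ I, ∃ t ∈ I, γ s ≠ γ t) ∧ LocallyLipschitzOnSet γ I ∧
    ∀ s ∈ I, ∀ t ∈ I, s < t → L.causal (γ s) (γ t)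

/-- A future-directed timelike curve on `I`. -/
def IsTimelikeCurveOn (L : LorPreLength X) (γ : ℝ → X) (I : Set ℝ) : Prop :=
  (∃ s ∈ I, ∃ t ∈ I, γ s ≠ γ t) ∧ LocallyLipschitzOnSet γ I ∧
    ∀ s ∈ I, ∀ t ∈ I, s < t → L.chron (γ s) (γ t)

/-- A future-directed null curve on `I`: causal with no two points chronologically related. -/
def IsNullCurveOn (L : LorPreLength X) (γ : ℝ → X) (I : Set ℝ) : Prop :=
  IsCausalCurveOn L γ I ∧ ∀ s ∈ I, ∀ t ∈ I, s < t → ¬ L.chron (γ s) (γ t)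

/-- A timelike distance realizer from `p` to `q`, parametrised on `[a,b]`. -/
def IsTimelikeRealizer (L : LorPreLength X) (γ : ℝ → X) (a b : ℝ) (p q : X) : Prop :=
  a < b ∧ γ a = p ∧ γ b = q ∧ IsTimelikeCurveOn L γ (Set.Icc a b) ∧
    L.tau p q = tauLength L.tau γ a b

/-- A timelike geodesic on `I`: locally a distance realizer. -/
def IsTimelikeGeodesicOn (L : LorPreLength X) (γ : ℝ → X) (I : Set ℝ) : Prop :=
  IsTimelikeCurveOn L γ I ∧
    ∀ t ∈ I, ∃ a b : ℝ, a ≤ t ∧ t ≤ b ∧ Set.Icc a b ⊆ I ∧ Set.Icc a b ∈ 𝓝[I] t ∧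
      L.tau (γ a) (γ b) = tauLength L.tau γ a b

/-- Inextendibility for a curve defined on all of `ℝ`: no future or past endpoint. -/
def Inextendible (γ : ℝ → X) : Prop :=
  (¬ ∃ p : X, Tendsto γ atTop (𝓝 p)) ∧ (¬ ∃ p : X, Tendsto γ atBot (𝓝 p))

/-! ## Lorentzian length spaces -/

/-- Locally causally closed. -/
def LocallyCausallyClosed (L : LorPreLength X) : Prop :=
  ∀ x : X, ∃ U ∈ 𝓝 x, ∀ (p q : ℕ → X) (p₀ q₀ : X), (∀ n, p n ∈ U) → (∀ n, q n ∈ U) →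
    p₀ ∈ U → q₀ ∈ U → Tendsto p atTop (𝓝 p₀) → Tendsto q atTop (𝓝 q₀) →
    (∀ n, L.causal (p n) (q n)) → L.causal p₀ q₀

/-- Causally path connected. -/
def CausallyPathConnected (L : LorPreLength X) : Prop :=
  (∀ x y, L.chron x y → ∃ (γ : ℝ → X) (a b : ℝ), a < b ∧ γ a = x ∧ γ b = y ∧
    IsTimelikeCurveOn L γ (Set.Icc a b)) ∧
  (∀ x y, L.causal x y → x ≠ y → ∃ (γ : ℝ → X) (a b : ℝ), a < b ∧ γ a = x ∧ γ b = y ∧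
    IsCausalCurveOn L γ (Set.Icc a b))

/-- `Ω` is a localising neighbourhood of `x`. -/
def IsLocalisingNbhd (L : LorPreLength X) (x : X) (Ω : Set X) : Prop :=
  IsOpen Ω ∧ x ∈ Ω ∧
  (∃ C : ENNReal, C ≠ ⊤ ∧ ∀ (γ : ℝ → X) (a b : ℝ), a < b →
    IsCausalCurveOn L γ (Set.Icc a b) → (∀ t ∈ Set.Icc a b, γ t ∈ Ω) →
    eVariationOn γ (Set.Icc a b) ≤ C) ∧
  (∀ y ∈ Ω, (Iplus L.tau {y} ∩ Ω).Nonempty ∧ (Iminus L.tau {y} ∩ Ω).Nonempty) ∧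
  ∃ ω : X → X → ENNReal,
    (∀ p ∈ Ω, ∀ q ∈ Ω, ω p q ≠ ⊤) ∧
    LowerSemicontinuousOn (fun pq : X × X => ω pq.1 pq.2) (Ω ×ˢ Ω) ∧
    (∀ p ∈ Ω, ∀ q ∈ Ω, ∀ r ∈ Ω, L.causal p q → L.causal q r → ω p q + ω q r ≤ ω p r) ∧
    (∀ p ∈ Ω, ∀ q ∈ Ω, (0 < ω p q ↔ L.chron p q)) ∧
    (∀ p ∈ Ω, ∀ q ∈ Ω, L.causal p q → p ≠ q →
      ∃ (γ : ℝ → X) (a b : ℝ), a < b ∧ γ a = p ∧ γ b = q ∧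
        IsCausalCurveOn L γ (Set.Icc a b) ∧ (∀ t ∈ Set.Icc a b, γ t ∈ Ω) ∧
        tauLength L.tau γ a b = ω p q ∧
        ∀ (γ' : ℝ → X) (a' b' : ℝ), a' < b' → γ' a' = p → γ' b' = q →
          IsCausalCurveOn L γ' (Set.Icc a' b') → (∀ t ∈ Set.Icc a' b', γ' t ∈ Ω) →
          tauLength L.tau γ' a' b' ≤ tauLength L.tau γ a b)

/-- `Ω` is a regular localising neighbourhood of `x`. -/
def IsRegularLocalisingNbhd (L : LorPreLength X) (x : X) (Ω : Set X) : Prop :=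
  IsLocalisingNbhd L x Ω ∧
  ∀ p ∈ Ω, ∀ q ∈ Ω, L.chron p q →
    ∃ (γ : ℝ → X) (a b : ℝ), a < b ∧ γ a = p ∧ γ b = q ∧
      IsTimelikeCurveOn L γ (Set.Icc a b) ∧ (∀ t ∈ Set.Icc a b, γ t ∈ Ω) ∧
      (∀ (γ' : ℝ → X) (a' b' : ℝ), a' < b' → γ' a' = p → γ' b' = q →
        IsCausalCurveOn L γ' (Set.Icc a' b') → (∀ t ∈ Set.Icc a' b', γ' t ∈ Ω) →
        tauLength L.tau γ' a' b' ≤ tauLength L.tau γ a b) ∧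
      (∀ (γ' : ℝ → X) (a' b' : ℝ), a' < b' → γ' a' = p → γ' b' = q →
        IsCausalCurveOn L γ' (Set.Icc a' b') → (∀ t ∈ Set.Icc a' b', γ' t ∈ Ω) →
        (∃ c d : ℝ, a' ≤ c ∧ c < d ∧ d ≤ b' ∧
          ∀ s ∈ Set.Icc c d, ∀ t ∈ Set.Icc c d, s < t → ¬ L.chron (γ' s) (γ' t)) →
        tauLength L.tau γ' a' b' < tauLength L.tau γ a b)

def Localisable (L : LorPreLength X) : Prop := ∀ x : X, ∃ Ω, IsLocalisingNbhd L x Ω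

def RegularlyLocalisable (L : LorPreLength X) : Prop :=
  ∀ x : X, ∃ Ω, IsRegularLocalisingNbhd L x Ω

/-- `X` is a Lorentzian length space. -/
def IsLorLengthSpace (L : LorPreLength X) : Prop :=
  LocallyCausallyClosed L ∧ CausallyPathConnected L ∧ Localisable L ∧
    ∀ x y, L.causal x y → x ≠ y →
      L.tau x y = ⨆ (γ : ℝ → X) (a : ℝ) (b : ℝ) (_ : a < b) (_ : γ a = x) (_ : γ b = y)
        (_ : IsCausalCurveOn L γ (Set.Icc a b)), tauLength L.tau γ a b

/-- Strong causality for pre-length spaces: the metric topology is generated by the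
chronological diamonds. -/
def PLSStronglyCausal (L : LorPreLength X) : Prop :=
  (inferInstance : TopologicalSpace X) = TopologicalSpace.generateFrom
    {s : Set X | ∃ p q : X, s = {z | L.chron p z} ∩ {z | L.chron z q}}

/-- Global hyperbolicity for pre-length spaces. -/
def GloballyHyperbolic (L : LorPreLength X) : Prop :=
  PLSStronglyCausal L ∧ ∀ x y : X, IsCompact {z : X | L.causal x z ∧ L.causal z y}

/-- Timelike geodesic connectedness: chronologically related points are joined by
timelike distance realizers. -/
def TimelikeGeodConnected (L : LorPreLength X) : Prop :=
  ∀ x y, L.chron x y → ∃ (γ : ℝ → X) (a b : ℝ), IsTimelikeRealizer L γ a b x y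

/-- Timelike geodesic prolongation. -/
def TimelikeGeodesicProlongation (L : LorPreLength X) : Prop :=
  ∀ (γ : ℝ → X) (a b : ℝ), a < b → IsTimelikeCurveOn L γ (Set.Icc a b) →
    L.tau (γ a) (γ b) = tauLength L.tau γ a b →
    ∃ ε > (0 : ℝ), ∃ γ' : ℝ → X, (∀ t ∈ Set.Icc a b, γ' t = γ t) ∧
      IsTimelikeGeodesicOn L γ' (Set.Ioo (a - ε) (b + ε))

/-! ## The Minkowski plane 𝕃² (first coordinate = time) -/

def mCausal (p q : ℝ × ℝ) : Prop := |q.2 - p.2| ≤ q.1 - p.1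
def mChron (p q : ℝ × ℝ) : Prop := |q.2 - p.2| < q.1 - p.1

open Classical in
/-- The time separation of the Minkowski plane. -/
def mTau (p q : ℝ × ℝ) : ℝ :=
  if mCausal p q then Real.sqrt ((q.1 - p.1) ^ 2 - (q.2 - p.2) ^ 2) else 0

/-- The Minkowski bilinear form on `ℝ²` (first coordinate = time). -/
def mForm (u v : ℝ × ℝ) : ℝ := -(u.1 * v.1) + u.2 * v.2

/-- The Lorentzian norm of a timelike vector. -/
def mNorm (u : ℝ × ℝ) : ℝ := Real.sqrt (-(mForm u u))

/-! ## Curvature bounds -/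

/-- `x` lies on the side `γ` (from `pi` to `pj`, parametrised on `[a,b]`) of a timelike
geodesic triangle, with corresponding point `xb` on the comparison side from `qi` to `qj`. -/
def OnSideCorresp (L : LorPreLength X) (γ : ℝ → X) (a b : ℝ) (pi pj : X)
    (qi qj : ℝ × ℝ) (x : X) (xb : ℝ × ℝ) : Prop :=
  (∃ t ∈ Set.Icc a b, γ t = x) ∧
  (∃ s ∈ Set.Icc (0 : ℝ) 1, xb = qi + s • (qj - qi)) ∧
  ENNReal.ofReal (mTau qi xb) = L.tau pi x ∧ ENNReal.ofReal (mTau xb qj) = L.tau x pj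

/-- A point of a timelike geodesic triangle together with its corresponding point
in a comparison triangle in `𝕃²`: the pair lies on one of the three sides. -/
def PointOnTriangle (L : LorPreLength X) (γ₁₂ γ₂₃ γ₁₃ : ℝ → X)
    (a₁₂ b₁₂ a₂₃ b₂₃ a₁₃ b₁₃ : ℝ) (p₁ p₂ p₃ : X) (q₁ q₂ q₃ : ℝ × ℝ)
    (x : X) (xb : ℝ × ℝ) : Prop :=
  OnSideCorresp L γ₁₂ a₁₂ b₁₂ p₁ p₂ q₁ q₂ x xb ∨
  OnSideCorresp L γ₂₃ a₂₃ b₂₃ p₂ p₃ q₂ q₃ x xb ∨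
  OnSideCorresp L γ₁₃ a₁₃ b₁₃ p₁ p₃ q₁ q₃ x xb

/-- Global timelike curvature bounded below by `0`: for any timelike geodesic triangle,
any comparison triangle in `𝕃²`, and any pair of points on the sides with their
corresponding points, `τ(x,y) ≤ τ̄(x̄,ȳ)`. -/
def CurvBoundedBelowZero (L : LorPreLength X) : Prop :=
  ∀ (p₁ p₂ p₃ : X), L.chron p₁ p₂ → L.chron p₂ p₃ →
  ∀ (γ₁₂ γ₂₃ γ₁₃ : ℝ → X) (a₁₂ b₁₂ a₂₃ b₂₃ a₁₃ b₁₃ : ℝ),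
    IsTimelikeRealizer L γ₁₂ a₁₂ b₁₂ p₁ p₂ →
    IsTimelikeRealizer L γ₂₃ a₂₃ b₂₃ p₂ p₃ →
    IsTimelikeRealizer L γ₁₃ a₁₃ b₁₃ p₁ p₃ →
  ∀ (q₁ q₂ q₃ : ℝ × ℝ), mChron q₁ q₂ → mChron q₂ q₃ →
    ENNReal.ofReal (mTau q₁ q₂) = L.tau p₁ p₂ →
    ENNReal.ofReal (mTau q₂ q₃) = L.tau p₂ p₃ →
    ENNReal.ofReal (mTau q₁ q₃) = L.tau p₁ p₃ →
  ∀ (x y : X) (xb yb : ℝ × ℝ),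
    PointOnTriangle L γ₁₂ γ₂₃ γ₁₃ a₁₂ b₁₂ a₂₃ b₂₃ a₁₃ b₁₃ p₁ p₂ p₃ q₁ q₂ q₃ x xb →
    PointOnTriangle L γ₁₂ γ₂₃ γ₁₃ a₁₂ b₁₂ a₂₃ b₂₃ a₁₃ b₁₃ p₁ p₂ p₃ q₁ q₂ q₃ y yb →
    L.tau x y ≤ ENNReal.ofReal (mTau xb yb)

/-! ## The Lorentzian metric product Σ × ℝ -/

section Product

variable {S : Type*} [MetricSpace S]

def prodCausal (p q : S × ℝ) : Prop := dist p.1 q.1 ≤ q.2 - p.2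
def prodChron (p q : S × ℝ) : Prop := dist p.1 q.1 < q.2 - p.2

open Classical in
/-- The time separation of the Lorentzian metric product, real-valued. -/
def prodTauReal (p q : S × ℝ) : ℝ :=
  if prodCausal p q then Real.sqrt ((q.2 - p.2) ^ 2 - dist p.1 q.1 ^ 2) else 0

/-- The time separation of the Lorentzian metric product. -/
def prodTau (p q : S × ℝ) : ENNReal := ENNReal.ofReal (prodTauReal p q)

end Product

/-! ## Alexandrov geometry of metric spaces -/

/-- A unit-speed geodesic from `a` to `b`. -/
def UnitSpeedGeodesic {S : Type*} [MetricSpace S] (γ : ℝ → S) (a b : S) : Prop :=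
  γ 0 = a ∧ γ (dist a b) = b ∧
    ∀ s ∈ Set.Icc (0 : ℝ) (dist a b), ∀ t ∈ Set.Icc (0 : ℝ) (dist a b),
      dist (γ s) (γ t) = |s - t|

/-- A strictly intrinsic (geodesic) metric space. -/
def StrictlyIntrinsic (S : Type*) [MetricSpace S] : Prop :=
  ∀ a b : S, ∃ γ : ℝ → S, UnitSpeedGeodesic γ a b

/-- Alexandrov curvature bounded below by `0`: distances between points on the sides of a
geodesic triangle dominate the corresponding distances in a Euclidean comparison triangle. -/
def AlexCurvNonneg (S : Type*) [MetricSpace S] : Prop :=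
  ∀ (a b c : S) (γab γac : ℝ → S), UnitSpeedGeodesic γab a b → UnitSpeedGeodesic γac a c →
  ∀ ab bb cb : EuclideanSpace ℝ (Fin 2),
    dist ab bb = dist a b → dist ab cb = dist a c → dist bb cb = dist b c →
  ∀ s ∈ Set.Icc (0 : ℝ) (dist a b), ∀ t ∈ Set.Icc (0 : ℝ) (dist a c),
  ∀ xb yb : EuclideanSpace ℝ (Fin 2),
    xb = ab + (s / dist a b) • (bb - ab) → yb = ab + (t / dist a c) • (cb - ab) →
    dist xb yb ≤ dist (γab s) (γac t)

end BSC

open BSC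

/-!
Approximate each `z k` from its chronological past by a sequence `c k n → z k`. By lower
semicontinuity of `τ`, each point of `I⁻(z k)` is eventually in `I⁻(c k n)`, so one can pick
`x k` among the `c k n` with `x (k-1) ≪ x k` and `c j k ≪ x k` for all `j ≤ k`. Then every
`y ≪ z k` lies below some `c k n` with `n ≥ k`, hence below `x n`. If `I⁻(ς) = X`, then
`z 0 ≪ z k ≤ z (k+1)` for some `k`, so `z 0 ≪ z (k+1)`.
-/

namespace BSC

variable {X : Type*} [TopologicalSpace X]

theorem exists_seq_of_exists_succ {α : Type*} {P : ℕ → α → Prop} {R : α → α → Prop}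
    (h0 : ∃ a, P 0 a) (hsucc : ∀ k a, P k a → ∃ b, R a b ∧ P (k + 1) b) :
    ∃ x : ℕ → α, (∀ k, P k (x k)) ∧ ∀ k, R (x k) (x (k + 1)) := by
  obtain ⟨a₀, ha₀⟩ := h0
  choose next hnextR hnextP using hsucc
  let x : ∀ k, {a // P k a} :=
    fun k => Nat.rec ⟨a₀, ha₀⟩ (fun k a => ⟨next k a a.2, hnextP k a a.2⟩) k
  exact ⟨fun k => (x k).1, fun k => (x k).2, fun k => hnextR k _ _⟩

namespace LorentzianMetric

variable (L : LorentzianMetric X)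

theorem chron_trans {x y z : X} (hxy : chron L.tau x y) (hyz : chron L.tau y z) :
    chron L.tau x z :=
  hxy.trans_le (le_self_add.trans (L.rev_tri x y z hxy hyz))

theorem Iminus_range_subset {x z : ℕ → X} (hxz : ∀ k, chron L.tau (x k) (z k)) :
    Iminus L.tau (range x) ⊆ Iminus L.tau (range z) := by
  rintro y ⟨_, ⟨k, rfl⟩, hy⟩
  exact ⟨z k, mem_range_self k, L.chron_trans hy (hxz k)⟩

theorem eventually_chron_of_tendsto {ι : Type*} {l : Filter ι} {c : ι → X} {x w : X}
    (hc : Tendsto c l (𝓝 x)) (hw : chron L.tau w x) : ∀ᶠ n in l, chron L.tau w (c n) :=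
  (tendsto_const_nhds.prodMk_nhds hc).eventually (L.lsc (w, x) 0 hw)

end LorentzianMetric

namespace CompatibleCausal

variable {L : LorentzianMetric X} (C : CompatibleCausal L)

theorem chron_of_chron_of_rel {x y z : X} (hxy : chron L.tau x y) (hyz : C.rel y z) :
    chron L.tau x z :=
  hxy.trans_le (le_self_add.trans (C.rev_tri x y z (C.chron_sub x y hxy) hyz))

theorem rel_of_futureCausalChain {z : ℕ → X} (hz : FutureCausalChain C.rel z) {j k : ℕ}
    (hjk : j ≤ k) : C.rel (z j) (z k) := by
  induction hjk with
  | refl => exact C.refl _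
  | step _ ih => exact C.trans _ _ _ ih (hz _)

theorem exists_futureChain_Iminus_eq {z : ℕ → X} (hz : FutureCausalChain C.rel z)
    {c : ℕ → ℕ → X} (hcz : ∀ k n, chron L.tau (c k n) (z k))
    (hc : ∀ k, Tendsto (c k) atTop (𝓝 (z k))) (hz₀ : (Iminus L.tau {z 0}).Nonempty) :
    ∃ x : ℕ → X, FutureChain L.tau x ∧ (∀ k, chron L.tau (x k) (z k)) ∧
      Iminus L.tau (range x) = Iminus L.tau (range z) := by
  have hstep : ∀ k w, chron L.tau w (z k) →
      ∃ v, chron L.tau w v ∧ chron L.tau v (z k) ∧ ∀ j ≤ k, chron L.tau (c j k) v := by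
    intro k w hw
    have hbelow : ∀ j ∈ Iic k, ∀ᶠ n in atTop, chron L.tau (c j k) (c k n) := fun j hj =>
      L.eventually_chron_of_tendsto (hc k)
        (C.chron_of_chron_of_rel (hcz j k) (C.rel_of_futureCausalChain hz hj))
    obtain ⟨n, hwn, hjn⟩ := ((L.eventually_chron_of_tendsto (hc k) hw).and
      ((eventually_all_finite (finite_Iic k)).2 hbelow)).exists
    exact ⟨c k n, hwn, hcz k n, hjn⟩
  obtain ⟨w₀, _, rfl, hw₀⟩ := hz₀
  obtain ⟨x, hxP, hxchain⟩ := exists_seq_of_exists_succ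
    (P := fun k v => chron L.tau v (z k) ∧ ∀ j ≤ k, chron L.tau (c j k) v)
    (R := chron L.tau)
    ((hstep 0 w₀ hw₀).imp fun _ hv => hv.2)
    (fun k v hv => hstep (k + 1) v (C.chron_of_chron_of_rel hv.1 (hz k)))
  refine ⟨x, hxchain, fun k => (hxP k).1,
    (L.Iminus_range_subset fun k => (hxP k).1).antisymm ?_⟩
  rintro y ⟨_, ⟨k, rfl⟩, hy⟩
  obtain ⟨n, hyn, hkn⟩ :=
    ((L.eventually_chron_of_tendsto (hc k) hy).and (eventually_ge_atTop k)).exists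
  exact ⟨x n, mem_range_self n, L.chron_trans hyn ((hxP n).2 k hkn)⟩

theorem Iminus_range_ne_univ {z : ℕ → X} (hz : FutureCausalChain C.rel z)
    (hnc : ∀ k k' : ℕ, k < k' → ¬ chron L.tau (z k) (z k')) :
    Iminus L.tau (range z) ≠ univ := by
  intro huniv
  obtain ⟨_, ⟨k, rfl⟩, hk⟩ : z 0 ∈ Iminus L.tau (range z) := huniv ▸ mem_univ _
  exact hnc 0 (k + 1) k.succ_pos (C.chron_of_chron_of_rel hk (hz k))

end CompatibleCausal

end BSC

/-- a future causal chain with nonempty pasts admits a future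
chronological chain with the same past; if no two members of the causal chain are
chronologically related, this past is not all of `X`. -/
theorem chron_chain_same_past {X : Type*} [TopologicalSpace X]
    (L : LorentzianMetric X) (C : CompatibleCausal L)
    (hdense : ChronDense L.tau)
    (z : ℕ → X) (hchain : FutureCausalChain C.rel z)
    (hpast : ∀ k, (Iminus L.tau {z k}).Nonempty) :
    (∃ x : ℕ → X, FutureChain L.tau x ∧ (∀ k, chron L.tau (x k) (z k)) ∧
      Iminus L.tau (Set.range x) = Iminus L.tau (Set.range z)) ∧
    ((∀ k k' : ℕ, k < k' → ¬ chron L.tau (z k) (z k')) →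
      Iminus L.tau (Set.range z) ≠ Set.univ) := by
  choose c _ hcz hc using fun k => hdense.1 (z k) (hpast k)
  exact ⟨C.exists_futureChain_Iminus_eq hchain hcz hc (hpast 0), C.Iminus_range_ne_univ hchain⟩
end
end

section
/- Let (X,σ,τ) be a strongly causal Lorentzian metric space. If {x_k} is a future chronological chain and x ∈ X satisfies I⁻({x_k}) = I⁻(x), then x_k converges to x in the topology σ. -/
open Topology Filter Set

noncomputable section

open BSC

/-- in a strongly causal Lorentzian metric space, a future
chronological chain whose past is the past of a point converges to that point. -/
theorem chron_chain_tendsto {X : Type*} [TopologicalSpace X]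
    (L : LorentzianMetric X) (hsc : StronglyCausal L.tau)
    (x : ℕ → X) (hchain : FutureChain L.tau x) (x₀ : X)
    (hpast : Iminus L.tau (Set.range x) = Iminus L.tau {x₀}) :
    Tendsto x atTop (𝓝 x₀) := by
  have htrans : ∀ a b c : X, chron L.tau a b → chron L.tau b c → chron L.tau a c := by
    intro a b c hab hbc
    exact lt_of_lt_of_le (lt_of_lt_of_le hab le_self_add) (L.rev_tri a b c hab hbc)
  -- every chain point is chronologically before x₀
  have hlt : ∀ n, chron L.tau (x n) x₀ := by
    intro n
    have : x n ∈ Iminus L.tau (Set.range x) := ⟨x (n + 1), ⟨n + 1, rfl⟩, hchain n⟩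
    rw [hpast] at this
    obtain ⟨y, hy, hch⟩ := this
    rwa [Set.mem_singleton_iff.mp hy] at hch
  rw [hsc.2]
  unfold AlexandrovTopology
  rw [TopologicalSpace.tendsto_nhds_generateFrom_iff]
  rintro s ⟨p, q, rfl⟩ ⟨⟨p', hp', hpx⟩, ⟨q', hq', hxq⟩⟩
  rw [Set.mem_singleton_iff.mp hp'] at hpx
  rw [Set.mem_singleton_iff.mp hq'] at hxq
  -- p ≪ x₀ so p ∈ I⁻(range x): some x k with p ≪ x k
  have hpmem : p ∈ Iminus L.tau (Set.range x) := by
    rw [hpast]; exact ⟨x₀, rfl, hpx⟩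
  obtain ⟨y, ⟨k, rfl⟩, hpk⟩ := hpmem
  -- for n ≥ k, p ≪ x n
  have hmono : ∀ n, k ≤ n → chron L.tau p (x n) := by
    intro n hn
    induction n with
    | zero => simpa [Nat.le_zero.mp hn] using hpk
    | succ m ih =>
      rcases Nat.le_succ_iff.mp hn with h | h
      · exact htrans _ _ _ (ih h) (hchain m)
      · subst h; exact hpk
  filter_upwards [eventually_ge_atTop k] with n hn
  exact ⟨⟨p, rfl, hmono n hn⟩, ⟨q, rfl, htrans _ _ _ (hlt n) hxq⟩⟩
end
end

section
/- Let (X,σ,τ) be a chronologically dense, causally simple Lorentzian metric space with a compatible causal relation ≤. If ς = {z_k} is a future causal chain with I⁻(z_k) ≠ ∅ for all k and I⁻(ς) ⊆ I⁻(x) for some x ∈ X, then z_k ≤ x for every k, i.e. ς ⊆ J⁻(x). -/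
open Topology Filter Set

noncomputable section

open BSC

/-- in a chronologically dense, causally simple Lorentzian metric
space, a future causal chain with nonempty pasts whose past is contained in `I⁻(x)`
is contained in `J⁻(x)`. -/
theorem causal_chain_in_causal_past {X : Type*} [TopologicalSpace X]
    (L : LorentzianMetric X) (C : CompatibleCausal L)
    (hdense : ChronDense L.tau)
    (hsimple : CausallySimple L.tau C.rel)
    (z : ℕ → X) (hchain : FutureCausalChain C.rel z)
    (hpast : ∀ k, (Iminus L.tau {z k}).Nonempty)
    (x : X) (hsub : Iminus L.tau (Set.range z) ⊆ Iminus L.tau {x}) :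
    ∀ k, C.rel (z k) x := by
  intro k
  obtain ⟨c, _, hcz, hctend⟩ := hdense.1 (z k) (hpast k)
  have hmem : ∀ n, c n ∈ Iminus L.tau {x} := fun n =>
    hsub ⟨z k, ⟨k, rfl⟩, hcz n⟩
  have hcl : z k ∈ closure (Iminus L.tau {x}) :=
    mem_closure_of_tendsto hctend (Filter.Eventually.of_forall fun n =>
      hmem n)
  have := hsimple.2.2 x
  rw [this] at hcl
  exact hcl
end
end

section
/- Let (Σ,d) be a metric space and equip Σ×ℝ with the relations and time separation of the Lorentzian metric product. Then τ satisfies the reverse triangle inequality over causally related triples: for all p,q,r ∈ Σ×ℝ with p ≤ q ≤ r, one has τ(p,r) ≥ τ(p,q) + τ(q,r). -/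
open Topology Filter Set

noncomputable section

open BSC

lemma sqrt_rev_tri_aux (a b d₁ d₂ : ℝ) (h1 : 0 ≤ d₁) (h2 : 0 ≤ d₂) (ha : d₁ ≤ a) (hb : d₂ ≤ b) :
    Real.sqrt (a^2 - d₁^2) + Real.sqrt (b^2 - d₂^2) ≤ Real.sqrt ((a+b)^2 - (d₁+d₂)^2) := by
  have hx : (0:ℝ) ≤ a^2 - d₁^2 := by nlinarith
  have hy : (0:ℝ) ≤ b^2 - d₂^2 := by nlinarith
  have hprod : Real.sqrt (a^2 - d₁^2) * Real.sqrt (b^2 - d₂^2) ≤ a*b - d₁*d₂ := by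
    rw [← Real.sqrt_mul hx]
    have h : (a^2 - d₁^2) * (b^2 - d₂^2) ≤ (a*b - d₁*d₂)^2 := by
      nlinarith [sq_nonneg (a*d₂ - b*d₁)]
    calc Real.sqrt ((a^2 - d₁^2)*(b^2 - d₂^2)) ≤ Real.sqrt ((a*b - d₁*d₂)^2) :=
          Real.sqrt_le_sqrt h
      _ = a*b - d₁*d₂ := Real.sqrt_sq (by nlinarith)
  have hnn : 0 ≤ Real.sqrt (a^2 - d₁^2) + Real.sqrt (b^2 - d₂^2) :=
    add_nonneg (Real.sqrt_nonneg _) (Real.sqrt_nonneg _)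
  rw [← Real.sqrt_sq hnn]
  apply Real.sqrt_le_sqrt
  nlinarith [hprod, Real.sq_sqrt hx, Real.sq_sqrt hy]

/-- the time separation of the Lorentzian metric product satisfies the
reverse triangle inequality over causally related triples. -/
theorem prod_reverse_triangle {S : Type*} [MetricSpace S] (p q r : S × ℝ)
    (hpq : prodCausal p q) (hqr : prodCausal q r) :
    prodTauReal p q + prodTauReal q r ≤ prodTauReal p r := by
  have hd : dist p.1 r.1 ≤ dist p.1 q.1 + dist q.1 r.1 := dist_triangle _ _ _
  have hpr : prodCausal p r := by
    unfold prodCausal at *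
    linarith
  unfold prodTauReal
  rw [if_pos hpq, if_pos hqr, if_pos hpr]
  have key := sqrt_rev_tri_aux (q.2 - p.2) (r.2 - q.2) (dist p.1 q.1) (dist q.1 r.1)
    dist_nonneg dist_nonneg hpq hqr
  refine key.trans (Real.sqrt_le_sqrt ?_)
  have h1 : dist p.1 r.1 ^ 2 ≤ (dist p.1 q.1 + dist q.1 r.1) ^ 2 := by
    apply sq_le_sq' <;> nlinarith [dist_nonneg (x := p.1) (y := r.1)]
  have : (q.2 - p.2) + (r.2 - q.2) = r.2 - p.2 := by ring
  nlinarith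
end
end

section
/- Let (Σ,d) be a metric space and equip Σ×ℝ with the Lorentzian metric product structure. Then the time separation τ : (Σ×ℝ)×(Σ×ℝ) → ℝ is continuous with respect to the product topology (in particular lower semicontinuous), τ(p,q) > 0 if and only if p ≪ q, and the chronological relation {(p,q) : p ≪ q} is an open subset of (Σ×ℝ)×(Σ×ℝ); consequently I⁺(p) = {q : p ≪ q} and I⁻(p) = {q : q ≪ p} are open for every p. -/
open Topology Filter Set

noncomputable section

open BSC

/-! Writing `t = q.2 - p.2` and `d = dist p.1 q.1`, one has `τ(p, q) = √(max (t - d) 0 * (t + d))`: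
on the causal region this is `√(t² - d²)`, and off it the first factor vanishes. This closed
form is visibly continuous and positive exactly when `d < t`; the chronological relation is open
as a strict inequality between continuous functions. -/

namespace BSC

variable {S : Type*} [MetricSpace S]

theorem prodTauReal_eq_sqrt (p q : S × ℝ) :
    prodTauReal p q =
      √(max (q.2 - p.2 - dist p.1 q.1) 0 * (q.2 - p.2 + dist p.1 q.1)) := by
  have hd : 0 ≤ dist p.1 q.1 := dist_nonneg
  unfold prodTauReal prodCausal
  split_ifs with h
  · rw [max_eq_left (by linarith)]
    ring_nf
  · rw [max_eq_right (by linarith), zero_mul, Real.sqrt_zero]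

theorem continuous_prodTauReal :
    Continuous fun pq : (S × ℝ) × (S × ℝ) => prodTauReal pq.1 pq.2 := by
  simp_rw [prodTauReal_eq_sqrt]
  fun_prop

theorem prodTauReal_pos_iff (p q : S × ℝ) : 0 < prodTauReal p q ↔ prodChron p q := by
  have hd : 0 ≤ dist p.1 q.1 := dist_nonneg
  rw [prodTauReal_eq_sqrt, Real.sqrt_pos, prodChron]
  constructor
  · intro h
    by_contra! hle
    rw [max_eq_right (by linarith), zero_mul] at h
    exact h.false
  · intro h
    rw [max_eq_left (by linarith)]
    exact mul_pos (by linarith) (by linarith)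

theorem isOpen_setOf_prodChron :
    IsOpen {pq : (S × ℝ) × (S × ℝ) | prodChron pq.1 pq.2} :=
  isOpen_lt (by fun_prop) (by fun_prop)

end BSC

/-- the time separation of the Lorentzian metric product is continuous
(in particular lower semicontinuous), positive exactly on chronologically related pairs,
and the chronological relation is open (so `I⁺(p)` and `I⁻(p)` are open). -/
theorem prodTau_continuous {S : Type*} [MetricSpace S] :
    Continuous (fun pq : (S × ℝ) × (S × ℝ) => prodTauReal pq.1 pq.2) ∧
    LowerSemicontinuous (fun pq : (S × ℝ) × (S × ℝ) => prodTau pq.1 pq.2) ∧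
    (∀ p q : S × ℝ, 0 < prodTauReal p q ↔ prodChron p q) ∧
    IsOpen {pq : (S × ℝ) × (S × ℝ) | prodChron pq.1 pq.2} ∧
    (∀ p : S × ℝ, IsOpen {q : S × ℝ | prodChron p q} ∧
      IsOpen {q : S × ℝ | prodChron q p}) := by
  have hopen := isOpen_setOf_prodChron (S := S)
  refine ⟨continuous_prodTauReal, ?_, prodTauReal_pos_iff, hopen, fun p => ⟨?_, ?_⟩⟩
  · exact (ENNReal.continuous_ofReal.comp continuous_prodTauReal).lowerSemicontinuous
  · exact hopen.preimage (Continuous.prodMk_right p)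
  · exact hopen.preimage (Continuous.prodMk_left p)
end
end

section
/- Let (Σ,d) be a metric space and equip Σ×ℝ with the Lorentzian metric product structure. Then the Lorentzian metric product is distinguishing (I⁻(p) = I⁻(q) implies p = q, and I⁺(p) = I⁺(q) implies p = q), and the Alexandrov topology, i.e. the topology generated by the subbasis of chronological diamonds I⁺(p) ∩ I⁻(q) for p,q ∈ Σ×ℝ, coincides with the product topology; in particular the Lorentzian metric product is strongly causal. -/
open Topology Filter Set

noncomputable section

open BSC

section Aux

variable {S : Type*} [MetricSpace S]

private lemma chron_iff' (p q : S × ℝ) :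
    chron (fun a b : S × ℝ => prodTau a b) p q ↔ dist p.1 q.1 < q.2 - p.2 := by
  unfold chron prodTau prodTauReal
  rw [ENNReal.ofReal_pos]
  constructor
  · intro h
    by_cases hc : prodCausal p q
    · simp only [hc, if_true] at h
      have h2 := Real.sqrt_pos.mp h
      have hd : (0:ℝ) ≤ dist p.1 q.1 := dist_nonneg
      have hc' : dist p.1 q.1 ≤ q.2 - p.2 := hc
      nlinarith
    · simp [hc] at h
  · intro h
    have hc : prodCausal p q := le_of_lt h
    simp only [hc, if_true]
    apply Real.sqrt_pos.mpr
    have hd : (0:ℝ) ≤ dist p.1 q.1 := dist_nonneg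
    nlinarith

private lemma mem_Iminus' (p x : S × ℝ) :
    p ∈ Iminus (fun a b : S × ℝ => prodTau a b) {x} ↔ dist p.1 x.1 < x.2 - p.2 := by
  simp [Iminus, chron_iff']

private lemma mem_Iplus' (p x : S × ℝ) :
    p ∈ Iplus (fun a b : S × ℝ => prodTau a b) {x} ↔ dist x.1 p.1 < p.2 - x.2 := by
  simp [Iplus, chron_iff']

private lemma dist_le_of_Iminus_sub {x y : S × ℝ}
    (h : Iminus (fun a b : S × ℝ => prodTau a b) {x}
       ⊆ Iminus (fun a b : S × ℝ => prodTau a b) {y}) :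
    dist x.1 y.1 ≤ y.2 - x.2 := by
  by_contra hlt
  push_neg at hlt
  set ε := (dist x.1 y.1 - (y.2 - x.2)) / 2 with hε
  have hεpos : 0 < ε := by simp [hε]; linarith
  have hmem : (x.1, x.2 - ε) ∈ Iminus (fun a b : S × ℝ => prodTau a b) {x} := by
    rw [mem_Iminus']; simp [hεpos]
  have := (mem_Iminus' _ _).mp (h hmem)
  simp only at this
  have hd : dist x.1 y.1 = dist (x.1, x.2 - ε).1 y.1 := rfl
  rw [← hd] at this
  simp [hε] at this
  linarith

private lemma dist_le_of_Iplus_sub {x y : S × ℝ}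
    (h : Iplus (fun a b : S × ℝ => prodTau a b) {x}
       ⊆ Iplus (fun a b : S × ℝ => prodTau a b) {y}) :
    dist y.1 x.1 ≤ x.2 - y.2 := by
  by_contra hlt
  push_neg at hlt
  set ε := (dist y.1 x.1 - (x.2 - y.2)) / 2 with hε
  have hεpos : 0 < ε := by simp [hε]; linarith
  have hmem : (x.1, x.2 + ε) ∈ Iplus (fun a b : S × ℝ => prodTau a b) {x} := by
    rw [mem_Iplus']; simp [hεpos]
  have := (mem_Iplus' _ _).mp (h hmem)
  simp only at this
  have hd : dist y.1 x.1 = dist y.1 (x.1, x.2 + ε).1 := rfl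
  rw [← hd] at this
  simp [hε] at this
  linarith

private lemma eq_of_dist_rel {x y : S × ℝ} (h1 : dist x.1 y.1 ≤ y.2 - x.2)
    (h2 : dist y.1 x.1 ≤ x.2 - y.2) : x = y := by
  have hd : dist x.1 y.1 = dist y.1 x.1 := dist_comm _ _
  have hnn : (0:ℝ) ≤ dist x.1 y.1 := dist_nonneg
  have h0 : dist x.1 y.1 = 0 := by linarith
  have h2' : x.2 = y.2 := by linarith
  exact Prod.ext (eq_of_dist_eq_zero h0) h2'

private lemma diamond_open (p q : S × ℝ) :
    IsOpen (Iplus (fun a b : S × ℝ => prodTau a b) {p}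
          ∩ Iminus (fun a b : S × ℝ => prodTau a b) {q}) := by
  have h1 : IsOpen (Iplus (fun a b : S × ℝ => prodTau a b) {p}) := by
    have : Iplus (fun a b : S × ℝ => prodTau a b) {p}
        = {z : S × ℝ | dist p.1 z.1 < z.2 - p.2} := by
      ext z; exact mem_Iplus' z p
    rw [this]
    exact isOpen_lt (Continuous.dist continuous_const (continuous_fst))
      (by fun_prop)
  have h2 : IsOpen (Iminus (fun a b : S × ℝ => prodTau a b) {q}) := by
    have : Iminus (fun a b : S × ℝ => prodTau a b) {q}
        = {z : S × ℝ | dist z.1 q.1 < q.2 - z.2} := by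
      ext z; exact mem_Iminus' z q
    rw [this]
    exact isOpen_lt (Continuous.dist continuous_fst continuous_const)
      (by fun_prop)
  exact h1.inter h2

private lemma topo_eq :
    (inferInstance : TopologicalSpace (S × ℝ)) =
      AlexandrovTopology (fun p q : S × ℝ => prodTau p q) := by
  apply le_antisymm
  · exact le_generateFrom (by rintro s ⟨p, q, rfl⟩; exact diamond_open p q)
  · rw [TopologicalSpace.le_def]
    intro U hU
    have hcov : U = ⋃₀ {V : Set (S × ℝ) |
        (∃ p q : S × ℝ, V = Iplus (fun a b : S × ℝ => prodTau a b) {p}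
          ∩ Iminus (fun a b : S × ℝ => prodTau a b) {q}) ∧ V ⊆ U} := by
      apply Subset.antisymm
      · intro z hz
        rcases Metric.isOpen_iff.mp hU z hz with ⟨ε, hε, hball⟩
        refine mem_sUnion.mpr ⟨Iplus (fun a b : S × ℝ => prodTau a b) {(z.1, z.2 - ε)}
          ∩ Iminus (fun a b : S × ℝ => prodTau a b) {(z.1, z.2 + ε)}, ⟨⟨_, _, rfl⟩, ?_⟩, ?_, ?_⟩
        · intro w hw
          apply hball
          rcases hw with ⟨h1, h2⟩
          rw [mem_Iplus'] at h1; rw [mem_Iminus'] at h2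
          have h1' : dist z.1 w.1 < w.2 - (z.2 - ε) := h1
          have h2' : dist w.1 z.1 < (z.2 + ε) - w.2 := h2
          have hd : (0:ℝ) ≤ dist z.1 w.1 := dist_nonneg
          have hdc : dist w.1 z.1 = dist z.1 w.1 := dist_comm _ _
          rw [Metric.mem_ball, Prod.dist_eq, max_lt_iff]
          constructor
          · rw [dist_comm]; linarith
          · rw [Real.dist_eq, abs_lt]; constructor <;> linarith
        · rw [mem_Iplus']; show dist z.1 z.1 < z.2 - (z.2 - ε); simp [hε]
        · rw [mem_Iminus']; show dist z.1 z.1 < (z.2 + ε) - z.2; simp [hε]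
      · intro z hz
        rcases mem_sUnion.mp hz with ⟨V, ⟨_, hVU⟩, hzV⟩
        exact hVU hzV
    rw [hcov]
    apply TopologicalSpace.GenerateOpen.sUnion
    rintro V ⟨⟨p, q, rfl⟩, -⟩
    exact TopologicalSpace.GenerateOpen.basic _ ⟨p, q, rfl⟩

end Aux

/-- the Lorentzian metric product is distinguishing and its Alexandrov
topology coincides with the product topology; in particular it is strongly causal. -/
theorem prod_strongly_causal {S : Type*} [MetricSpace S] :
    Distinguishing (fun p q : S × ℝ => prodTau p q) ∧
    (inferInstance : TopologicalSpace (S × ℝ)) =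
      AlexandrovTopology (fun p q : S × ℝ => prodTau p q) ∧
    StronglyCausal (fun p q : S × ℝ => prodTau p q) := by
  have hdist : Distinguishing (fun p q : S × ℝ => prodTau p q) := by
    constructor
    · intro x y h
      exact eq_of_dist_rel (dist_le_of_Iminus_sub h.subset)
        (dist_le_of_Iminus_sub h.symm.subset)
    · intro x y h
      exact eq_of_dist_rel (dist_le_of_Iplus_sub h.symm.subset)
        (dist_le_of_Iplus_sub h.subset)
  exact ⟨hdist, topo_eq, hdist, topo_eq⟩
end
end

section
/- Let (Σ,d) be a proper metric space (all closed balls are compact) and equip Σ×ℝ with the Lorentzian metric product structure. Then all causal diamonds are compact: for all p,q ∈ Σ×ℝ the set J⁺(p) ∩ J⁻(q) = {r ∈ Σ×ℝ : p ≤ r ≤ q} is compact in the product topology; in particular the Lorentzian metric product over a proper metric space is globally hyperbolic. -/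
open Topology Filter Set

noncomputable section

open BSC

section Aux

variable {S : Type*} [MetricSpace S]

lemma prodTau_pos_iff (p q : S × ℝ) : 0 < prodTau p q ↔ prodChron p q := by
  unfold prodTau prodTauReal
  rw [ENNReal.ofReal_pos]
  constructor
  · intro h
    by_cases hc : prodCausal p q
    · simp only [hc, if_true] at h
      have h2 := Real.sqrt_pos.mp h
      have hd : dist p.1 q.1 ≤ q.2 - p.2 := hc
      have hnn : (0:ℝ) ≤ dist p.1 q.1 := dist_nonneg
      show dist p.1 q.1 < q.2 - p.2
      nlinarith
    · simp [hc] at h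
  · intro h
    have hc : prodCausal p q := le_of_lt h
    simp only [hc, if_true]
    rw [Real.sqrt_pos]
    have hnn : (0:ℝ) ≤ dist p.1 q.1 := dist_nonneg
    have h' : dist p.1 q.1 < q.2 - p.2 := h
    nlinarith

lemma chron_prodTau_iff (p q : S × ℝ) :
    chron (fun a b : S × ℝ => prodTau a b) p q ↔ prodChron p q := prodTau_pos_iff p q

lemma Iminus_prod_singleton (x : S × ℝ) :
    Iminus (fun a b : S × ℝ => prodTau a b) {x} = {y | prodChron y x} := by
  ext y
  simp [Iminus, chron_prodTau_iff]

lemma Iplus_prod_singleton (x : S × ℝ) :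
    Iplus (fun a b : S × ℝ => prodTau a b) {x} = {y | prodChron x y} := by
  ext y
  simp [Iplus, chron_prodTau_iff]

lemma isOpen_chron_right (p : S × ℝ) : IsOpen {r : S × ℝ | prodChron p r} := by
  have : {r : S × ℝ | prodChron p r} = {r : S × ℝ | dist p.1 r.1 < r.2 - p.2} := rfl
  rw [this]
  exact isOpen_lt (by fun_prop) (by fun_prop)

lemma isOpen_chron_left (q : S × ℝ) : IsOpen {r : S × ℝ | prodChron r q} := by
  have : {r : S × ℝ | prodChron r q} = {r : S × ℝ | dist r.1 q.1 < q.2 - r.2} := rfl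
  rw [this]
  exact isOpen_lt (by fun_prop) (by fun_prop)

lemma causal_of_forall (x y : S × ℝ)
    (h : ∀ ε : ℝ, 0 < ε → dist x.1 y.1 < y.2 - x.2 + ε) : prodCausal x y := by
  show dist x.1 y.1 ≤ y.2 - x.2
  by_contra hlt
  push_neg at hlt
  have := h ((dist x.1 y.1 - (y.2 - x.2)) / 2) (by linarith)
  linarith

end Aux

/-- over a proper metric space, all causal diamonds of the Lorentzian
metric product are compact; in particular it is globally hyperbolic. -/
theorem prod_globally_hyperbolic {S : Type*} [MetricSpace S] [ProperSpace S] :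
    (∀ p q : S × ℝ, IsCompact {r : S × ℝ | prodCausal p r ∧ prodCausal r q}) ∧
    StronglyCausal (fun p q : S × ℝ => prodTau p q) := by
  constructor
  · -- compactness of causal diamonds
    intro p q
    have hsub : {r : S × ℝ | prodCausal p r ∧ prodCausal r q} ⊆
        (Metric.closedBall p.1 (q.2 - p.2)) ×ˢ (Set.Icc p.2 q.2) := by
      rintro ⟨a, t⟩ ⟨h1, h2⟩
      have d1 : dist p.1 a ≤ t - p.2 := h1
      have d2 : dist a q.1 ≤ q.2 - t := h2
      have n1 : (0:ℝ) ≤ dist p.1 a := dist_nonneg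
      have n2 : (0:ℝ) ≤ dist a q.1 := dist_nonneg
      refine ⟨?_, ?_, ?_⟩
      · simp only [Metric.mem_closedBall]
        rw [dist_comm]
        linarith
      · simpa using by linarith
      · simpa using by linarith
    refine IsCompact.of_isClosed_subset
      ((isCompact_closedBall _ _).prod isCompact_Icc) ?_ hsub
    have heq : {r : S × ℝ | prodCausal p r ∧ prodCausal r q} =
        {r : S × ℝ | dist p.1 r.1 ≤ r.2 - p.2} ∩ {r : S × ℝ | dist r.1 q.1 ≤ q.2 - r.2} := rfl
    rw [heq]
    exact (isClosed_le (continuous_const.dist continuous_fst)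
        (continuous_snd.sub continuous_const)).inter
      (isClosed_le (continuous_fst.dist continuous_const)
        (continuous_const.sub continuous_snd))
  constructor
  · -- distinguishing
    constructor
    · intro x y hxy
      have hmem : ∀ ε : ℝ, 0 < ε → ∀ z : S × ℝ,
          Iminus (fun a b : S × ℝ => prodTau a b) {z} =
            Iminus (fun a b : S × ℝ => prodTau a b) {x} →
          dist x.1 z.1 < z.2 - x.2 + ε := by
        intro ε hε z hz
        have : (x.1, x.2 - ε) ∈ Iminus (fun a b : S × ℝ => prodTau a b) {x} := by
          rw [Iminus_prod_singleton]
          show dist x.1 x.1 < x.2 - (x.2 - ε)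
          simpa using hε
        rw [← hz, Iminus_prod_singleton] at this
        have : dist x.1 z.1 < z.2 - (x.2 - ε) := this
        linarith
      have h1 : prodCausal x y := causal_of_forall x y fun ε hε => hmem ε hε y hxy.symm
      have hmem2 : ∀ ε : ℝ, 0 < ε → dist y.1 x.1 < x.2 - y.2 + ε := by
        intro ε hε
        have : (y.1, y.2 - ε) ∈ Iminus (fun a b : S × ℝ => prodTau a b) {y} := by
          rw [Iminus_prod_singleton]
          show dist y.1 y.1 < y.2 - (y.2 - ε)
          simpa using hε
        rw [← hxy] at this
        rw [Iminus_prod_singleton] at this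
        have : dist y.1 x.1 < x.2 - (y.2 - ε) := this
        linarith
      have h2 : prodCausal y x := causal_of_forall y x hmem2
      have e1 : dist x.1 y.1 ≤ y.2 - x.2 := h1
      have e2 : dist y.1 x.1 ≤ x.2 - y.2 := h2
      rw [dist_comm] at e2
      have hnn : (0:ℝ) ≤ dist x.1 y.1 := dist_nonneg
      have hd : dist x.1 y.1 = 0 := le_antisymm (by linarith) hnn
      have ht : x.2 = y.2 := by linarith
      exact Prod.ext (by rwa [dist_eq_zero] at hd) ht
    · intro x y hxy
      have key : ∀ z w : S × ℝ,
          Iplus (fun a b : S × ℝ => prodTau a b) {z} =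
            Iplus (fun a b : S × ℝ => prodTau a b) {w} →
          prodCausal w z := by
        intro z w hzw
        apply causal_of_forall
        intro ε hε
        have : (z.1, z.2 + ε) ∈ Iplus (fun a b : S × ℝ => prodTau a b) {z} := by
          rw [Iplus_prod_singleton]
          show dist z.1 z.1 < z.2 + ε - z.2
          simpa using hε
        rw [hzw, Iplus_prod_singleton] at this
        have : dist w.1 z.1 < z.2 + ε - w.2 := this
        linarith
      have h1 := key x y hxy
      have h2 := key y x hxy.symm
      have e1 : dist x.1 y.1 ≤ y.2 - x.2 := h2
      have e2 : dist y.1 x.1 ≤ x.2 - y.2 := h1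
      rw [dist_comm] at e2
      have hnn : (0:ℝ) ≤ dist x.1 y.1 := dist_nonneg
      have hd : dist x.1 y.1 = 0 := le_antisymm (by linarith) hnn
      have ht : x.2 = y.2 := by linarith
      exact Prod.ext (by rwa [dist_eq_zero] at hd) ht
  · -- topology = Alexandrov topology
    apply le_antisymm
    · apply le_generateFrom
      rintro s ⟨a, b, rfl⟩
      rw [Iplus_prod_singleton, Iminus_prod_singleton]
      exact (isOpen_chron_right a).inter (isOpen_chron_left b)
    · intro U hU
      -- U is open in the product topology; show it is generated-open
      have hgen : ∀ s ∈ {s : Set (S × ℝ) | ∃ p q : S × ℝ,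
          s = Iplus (fun a b : S × ℝ => prodTau a b) {p} ∩
              Iminus (fun a b : S × ℝ => prodTau a b) {q}},
          TopologicalSpace.GenerateOpen {s : Set (S × ℝ) | ∃ p q : S × ℝ,
            s = Iplus (fun a b : S × ℝ => prodTau a b) {p} ∩
                Iminus (fun a b : S × ℝ => prodTau a b) {q}} s :=
        fun s hs => TopologicalSpace.GenerateOpen.basic s hs
      show TopologicalSpace.GenerateOpen _ U
      have hUeq : U = ⋃₀ {D : Set (S × ℝ) | (∃ p q : S × ℝ,
          D = Iplus (fun a b : S × ℝ => prodTau a b) {p} ∩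
              Iminus (fun a b : S × ℝ => prodTau a b) {q}) ∧ D ⊆ U} := by
        apply Set.Subset.antisymm
        · intro x hx
          obtain ⟨ε, hε, hball⟩ := Metric.isOpen_iff.mp hU x hx
          refine Set.mem_sUnion.mpr ⟨Iplus (fun a b : S × ℝ => prodTau a b) {(x.1, x.2 - ε/2)}
            ∩ Iminus (fun a b : S × ℝ => prodTau a b) {(x.1, x.2 + ε/2)}, ⟨⟨_, _, rfl⟩, ?_⟩, ?_⟩
          · intro r hr
            rw [Iplus_prod_singleton, Iminus_prod_singleton] at hr
            obtain ⟨hr1, hr2⟩ := hr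
            have hr1' : dist x.1 r.1 < r.2 - (x.2 - ε/2) := hr1
            have hr2' : dist r.1 x.1 < (x.2 + ε/2) - r.2 := hr2
            rw [dist_comm] at hr2'
            have hnn : (0:ℝ) ≤ dist x.1 r.1 := dist_nonneg
            apply hball
            rw [Metric.mem_ball]
            have hdist : dist r x = max (dist r.1 x.1) (dist r.2 x.2) := rfl
            rw [hdist]
            apply max_lt
            · rw [dist_comm]; linarith
            · rw [Real.dist_eq]
              rw [abs_lt]
              constructor <;> linarith
          · rw [Set.mem_inter_iff, Iplus_prod_singleton, Iminus_prod_singleton]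
            constructor
            · show dist x.1 x.1 < x.2 - (x.2 - ε/2)
              simpa using by linarith
            · show dist x.1 x.1 < (x.2 + ε/2) - x.2
              simpa using by linarith
        · intro x hx
          obtain ⟨D, ⟨_, hDU⟩, hxD⟩ := hx
          exact hDU hxD
      rw [hUeq]
      apply TopologicalSpace.GenerateOpen.sUnion
      rintro D ⟨⟨a, b, rfl⟩, -⟩
      exact hgen _ ⟨a, b, rfl⟩
end
end

section
/- In the Minkowski plane 𝕃², every triple of prescribed timelike side lengths satisfying the reverse triangle inequality is realized by a timelike triangle: for all real numbers a > 0, b > 0 and c ≥ a + b there exist points p₁, p₂, p₃ ∈ ℝ² with p₁ ≪ p₂ ≪ p₃, τ̄(p₁,p₂) = a, τ̄(p₂,p₃) = b and τ̄(p₁,p₃) = c. -/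
open Topology Filter Set

noncomputable section

open BSC

/-- existence of comparison triangles in the Minkowski plane `𝕃²`. -/
theorem minkowski_comparison_triangle_exists (a b c : ℝ)
    (ha : 0 < a) (hb : 0 < b) (hc : a + b ≤ c) :
    ∃ p₁ p₂ p₃ : ℝ × ℝ, mChron p₁ p₂ ∧ mChron p₂ p₃ ∧
      mTau p₁ p₂ = a ∧ mTau p₂ p₃ = b ∧ mTau p₁ p₃ = c := by
  set t : ℝ := (c ^ 2 - b ^ 2 - a ^ 2) / (2 * a) with ht
  have hc0 : (0:ℝ) < c := lt_of_lt_of_le (by linarith) hc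
  have htb : b ≤ t := by
    rw [ht, le_div_iff₀ (by linarith)]
    nlinarith [sq_nonneg (c - a - b)]
  have ht0 : 0 < t := lt_of_lt_of_le hb htb
  have hx2nn : (0:ℝ) ≤ t ^ 2 - b ^ 2 := by nlinarith
  set x : ℝ := Real.sqrt (t ^ 2 - b ^ 2) with hxdef
  have hx0 : 0 ≤ x := Real.sqrt_nonneg _
  have hx2 : x ^ 2 = t ^ 2 - b ^ 2 := Real.sq_sqrt hx2nn
  have hxt : x < t := by
    nlinarith [hx2, hb, ht0]
  refine ⟨(0, 0), (a, 0), (a + t, x), ?_, ?_, ?_, ?_, ?_⟩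
  · show |(0:ℝ) - 0| < a - 0
    simpa using ha
  · show |x - 0| < (a + t) - a
    rw [sub_zero, abs_of_nonneg hx0]; linarith
  · have hcau : mCausal (0,0) (a,0) := le_of_lt (by show |(0:ℝ) - 0| < a - 0; simpa using ha)
    rw [mTau, if_pos hcau]
    simp only
    rw [show ((a,0):ℝ×ℝ).1 - ((0,0):ℝ×ℝ).1 = a by norm_num,
        show ((a,0):ℝ×ℝ).2 - ((0,0):ℝ×ℝ).2 = 0 by norm_num]
    rw [show a ^ 2 - (0:ℝ) ^ 2 = a ^ 2 by ring]
    exact Real.sqrt_sq ha.le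
  · have hcau : mCausal (a,0) (a+t,x) := by
      show |x - 0| ≤ (a + t) - a
      rw [sub_zero, abs_of_nonneg hx0]; linarith
    rw [mTau, if_pos hcau]
    simp only
    rw [show ((a+t,x):ℝ×ℝ).1 - ((a,0):ℝ×ℝ).1 = t by norm_num,
        show ((a+t,x):ℝ×ℝ).2 - ((a,0):ℝ×ℝ).2 = x by norm_num]
    rw [show t ^ 2 - x ^ 2 = b ^ 2 by rw [hx2]; ring]
    exact Real.sqrt_sq hb.le
  · have key : (a + t) ^ 2 - x ^ 2 = c ^ 2 := by
      rw [hx2]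
      have : t = (c ^ 2 - b ^ 2 - a ^ 2) / (2 * a) := ht
      field_simp at this
      nlinarith [this]
    have hcau : mCausal (0,0) (a+t,x) := by
      show |x - 0| ≤ (a + t) - 0
      rw [sub_zero, abs_of_nonneg hx0]
      nlinarith [key, hc0, hx0]
    rw [mTau, if_pos hcau]
    simp only
    rw [show ((a+t,x):ℝ×ℝ).1 - ((0,0):ℝ×ℝ).1 = a + t by norm_num,
        show ((a+t,x):ℝ×ℝ).2 - ((0,0):ℝ×ℝ).2 = x by norm_num]
    rw [key]
    exact Real.sqrt_sq hc0.le
end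
end
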